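/- arXiv:1802.03760 — 8 statements merged into one kernel-verified Lean document; each statement's English description precedes it below -/
import Mathlib

section
/- Let R₁, R₂, ..., Rₙ be finite relations (sets of tuples) and let ΔR₁, ..., ΔRₙ be sets of inserted tuples, with Rᵢ' = Rᵢ ∪ ΔRᵢ where Rᵢ ∩ ΔRᵢ = ∅. Then the natural join of the updated relations decomposes as R₁' ⋈ R₂' ⋈ ... ⋈ Rₙ' = (R₁ ⋈ R₂ ⋈ ... ⋈ Rₙ) ∪ ⋃ᵢ₌₁ⁿ (R₁' ⋈ ... ⋈ Rᵢ₋₁' ⋈ ΔRᵢ ⋈ Rᵢ₊₁ ⋈ ... ⋈ Rₙ), and the n delta-query terms together with the original join are pairwise disjoint. -/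
/-- The natural join of a family of relations: each relation `T i` is a set of
tuples over its attribute set `S i ⊆ A`; the join is the set of full tuples
`A → V` whose restriction to each `S i` lies in `T i`. -/
def NatJoin {A V : Type*} {n : ℕ} (S : Fin n → Set A)
    (T : ∀ i, Set (↥(S i) → V)) : Set (A → V) :=
  {t | ∀ i, (fun a : ↥(S i) => t a) ∈ T i}

/-- The `i`-th delta query: new versions `R'` for relations before `i`,
the delta `ΔR i` at position `i`, and old versions `R` after `i`. -/
def DeltaTerm {A V : Type*} {n : ℕ} (S : Fin n → Set A)
    (R ΔR R' : ∀ i, Set (↥(S i) → V)) (i : Fin n) : Set (A → V) :=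
  NatJoin S (fun j => if j < i then R' j else if j = i then ΔR j else R j)

lemma mem_DeltaTerm {A V : Type*} {n : ℕ} (S : Fin n → Set A)
    (R ΔR R' : ∀ i, Set (↥(S i) → V)) (i : Fin n) (t : A → V) :
    t ∈ DeltaTerm S R ΔR R' i ↔
      ∀ j, (fun a : ↥(S j) => t a) ∈
        (if j < i then R' j else if j = i then ΔR j else R j) := Iff.rfl

/-- Delta-query decomposition of joins under insertions: if `R' i = R i ∪ ΔR i`
with `R i` and `ΔR i` disjoint, then the join of the updated relations is the
union of the old join and the `n` delta queries, and these `n + 1` terms are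
pairwise disjoint. -/
theorem delta_join_decomposition {A V : Type*} {n : ℕ} (S : Fin n → Set A)
    (R ΔR R' : ∀ i, Set (↥(S i) → V))
    (hdisj : ∀ i, Disjoint (R i) (ΔR i))
    (hR' : ∀ i, R' i = R i ∪ ΔR i) :
    (NatJoin S R' = NatJoin S R ∪ ⋃ i, DeltaTerm S R ΔR R' i) ∧
      (∀ i, Disjoint (NatJoin S R) (DeltaTerm S R ΔR R' i)) ∧
      (∀ i k, i ≠ k → Disjoint (DeltaTerm S R ΔR R' i) (DeltaTerm S R ΔR R' k)) := by
  classical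
  have hsub : ∀ i, R i ⊆ R' i := fun i => (hR' i) ▸ Set.subset_union_left
  have hΔsub : ∀ i, ΔR i ⊆ R' i := fun i => (hR' i) ▸ Set.subset_union_right
  -- key: if t is in a delta term i, then the i-th restriction is in ΔR i and
  -- for j > i it is in R j
  have hdelta_at : ∀ (i : Fin n) (t : A → V), t ∈ DeltaTerm S R ΔR R' i →
      (fun a : ↥(S i) => t a) ∈ ΔR i := by
    intro i t ht
    have := (mem_DeltaTerm S R ΔR R' i t).1 ht i
    simpa using this
  have hdelta_gt : ∀ (i j : Fin n) (t : A → V), t ∈ DeltaTerm S R ΔR R' i →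
      i < j → (fun a : ↥(S j) => t a) ∈ R j := by
    intro i j t ht hij
    have := (mem_DeltaTerm S R ΔR R' i t).1 ht j
    rw [if_neg (by omega : ¬ j < i), if_neg (by omega : ¬ j = i)] at this
    exact this
  refine ⟨?_, ?_, ?_⟩
  · ext t
    constructor
    · intro ht
      by_cases h : ∀ j, (fun a : ↥(S j) => t a) ∈ R j
      · exact Or.inl h
      · push_neg at h
        have hP : ∃ j, (fun a : ↥(S j) => t a) ∈ ΔR j := by
          obtain ⟨j, hj⟩ := h
          have := ht j
          rw [hR' j] at this
          exact ⟨j, this.resolve_left hj⟩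
        set s := Finset.univ.filter (fun j : Fin n => (fun a : ↥(S j) => t a) ∈ ΔR j)
          with hs
        have hne : s.Nonempty := by
          obtain ⟨j, hj⟩ := hP
          exact ⟨j, by simp [hs, hj]⟩
        set i := s.max' hne with hi
        refine Or.inr (Set.mem_iUnion.2 ⟨i, ?_⟩)
        rw [mem_DeltaTerm]
        intro j
        rcases lt_trichotomy j i with hji | hje | hij
        · rw [if_pos hji]; exact ht j
        · rw [if_neg (by omega : ¬ j < i), if_pos hje]
          have hmem : i ∈ s := s.max'_mem hne
          rw [hs, Finset.mem_filter] at hmem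
          subst hje
          exact hmem.2
        · rw [if_neg (by omega : ¬ j < i), if_neg (by omega : ¬ j = i)]
          have := ht j
          rw [hR' j] at this
          rcases this with h1 | h2
          · exact h1
          · exfalso
            have hjs : j ∈ s := by rw [hs, Finset.mem_filter]; exact ⟨Finset.mem_univ _, h2⟩
            exact absurd (s.le_max' j hjs) (not_le.2 hij)
    · intro ht
      rcases ht with h | h
      · exact fun j => hsub j (h j)
      · obtain ⟨i, hi⟩ := Set.mem_iUnion.1 h
        intro j
        have := (mem_DeltaTerm S R ΔR R' i t).1 hi j
        rcases lt_trichotomy j i with hji | hje | hij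
        · rw [if_pos hji] at this; exact this
        · rw [if_neg (by omega : ¬ j < i), if_pos hje] at this
          exact hΔsub j this
        · rw [if_neg (by omega : ¬ j < i), if_neg (by omega : ¬ j = i)] at this
          exact hsub j this
  · intro i
    rw [Set.disjoint_left]
    intro t ht hti
    exact Set.disjoint_left.1 (hdisj i) (ht i) (hdelta_at i t hti)
  · have key : ∀ i k : Fin n, i < k →
        Disjoint (DeltaTerm S R ΔR R' i) (DeltaTerm S R ΔR R' k) := by
      intro i k hik
      rw [Set.disjoint_left]
      intro t hti htk
      exact Set.disjoint_left.1 (hdisj k) (hdelta_gt i k t hti hik) (hdelta_at k t htk)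
    intro i k hik
    rcases lt_or_gt_of_ne hik with h | h
    · exact key i k h
    · exact (key k i h).symm
end

section
/- For any finite directed graph G with IN edges, the number of (ordered) triangles, i.e., triples (a₁,a₂,a₃) with edges (a₁,a₂), (a₂,a₃), (a₃,a₁) all present, is at most IN^{3/2}. -/
/-!
Group the triangles `(a, b, c)` by their middle vertex `b`. Those through `b` inject into
(in-edges of `b`) × (out-edges of `b`) and, via `(a, b, c) ↦ (c, a)`, into `E`; so their
number `t_b` satisfies `t_b² ≤ d⁻(b) d⁺(b) |E| ≤ ((d⁻(b) + d⁺(b)) / 2)² |E|`. Summing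
`t_b ≤ √|E| (d⁻(b) + d⁺(b)) / 2` over `b`, the degrees add up to at most `2 |E|`.
-/

open Finset

section

variable {V : Type*} [DecidableEq V] (E : Finset (V × V))

def inDegree (b : V) : ℕ := #{e ∈ E | e.2 = b}

def outDegree (b : V) : ℕ := #{e ∈ E | e.1 = b}

theorem sum_inDegree_le (B : Finset V) : ∑ b ∈ B, inDegree E b ≤ #E := by
  simp only [inDegree, sum_card_fiberwise_eq_card_filter]
  exact card_filter_le _ _

theorem sum_outDegree_le (B : Finset V) : ∑ b ∈ B, outDegree E b ≤ #E := by
  simp only [outDegree, sum_card_fiberwise_eq_card_filter]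
  exact card_filter_le _ _

def triangles : Finset (V × V × V) :=
  {p ∈ E.image Prod.fst ×ˢ E.image Prod.fst ×ˢ E.image Prod.fst |
    (p.1, p.2.1) ∈ E ∧ (p.2.1, p.2.2) ∈ E ∧ (p.2.2, p.1) ∈ E}

theorem coe_triangles :
    (triangles E : Set (V × V × V)) =
      {p | (p.1, p.2.1) ∈ E ∧ (p.2.1, p.2.2) ∈ E ∧ (p.2.2, p.1) ∈ E} := by
  ext ⟨a, b, c⟩
  simp only [triangles, coe_filter, mem_product, mem_image, Set.mem_ofPred_eq,
    and_iff_right_iff_imp]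
  rintro ⟨hab, hbc, hca⟩
  exact ⟨⟨_, hab, rfl⟩, ⟨_, hbc, rfl⟩, ⟨_, hca, rfl⟩⟩

theorem card_triangles_filter_middle_le_mul (b : V) :
    #{p ∈ triangles E | p.2.1 = b} ≤ inDegree E b * outDegree E b := by
  rw [inDegree, outDegree, ← card_product]
  refine card_le_card_of_injOn (fun p => ((p.1, p.2.1), (p.2.1, p.2.2))) ?_ ?_
  · intro p hp
    simp only [triangles, coe_filter, mem_filter, Set.mem_ofPred_eq, mem_coe,
      mem_product] at hp ⊢
    exact ⟨⟨hp.1.2.1, hp.2⟩, hp.1.2.2.1, hp.2⟩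
  · rintro ⟨a, b, c⟩ - ⟨a', b', c'⟩ - h
    simp only [Prod.mk.injEq] at h ⊢
    exact ⟨h.1.1, h.1.2, h.2.2⟩

theorem card_triangles_filter_middle_le_card (b : V) :
    #{p ∈ triangles E | p.2.1 = b} ≤ #E := by
  refine card_le_card_of_injOn (fun p => (p.2.2, p.1)) ?_ ?_
  · intro p hp
    simp only [triangles, coe_filter, mem_filter, Set.mem_ofPred_eq, mem_coe] at hp ⊢
    exact hp.1.2.2.2
  · rintro ⟨a, b, c⟩ hp ⟨a', b', c'⟩ hp' h
    simp only [coe_filter, Set.mem_ofPred_eq] at hp hp'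
    simp only [Prod.mk.injEq] at h ⊢
    exact ⟨h.2, hp.2.trans hp'.2.symm, h.1⟩

end

theorem le_sqrt_mul_add_div_two {t x y m : ℝ} (ht : 0 ≤ t) (hx : 0 ≤ x) (hy : 0 ≤ y)
    (hxy : t ≤ x * y) (hm : t ≤ m) : t ≤ √m * ((x + y) / 2) := by
  have hm0 : 0 ≤ m := ht.trans hm
  have hsq : t ^ 2 ≤ (√m * ((x + y) / 2)) ^ 2 := by
    rw [mul_pow, Real.sq_sqrt hm0]
    nlinarith [sq_nonneg (x - y), mul_le_mul hxy hm ht (by positivity)]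
  exact (pow_le_pow_iff_left₀ ht (by positivity) two_ne_zero).1 hsq

theorem card_triangles_le {V : Type*} [DecidableEq V] (E : Finset (V × V)) :
    (#(triangles E) : ℝ) ≤ #E * √(#E : ℝ) := by
  have hfib : #(triangles E) = ∑ b ∈ E.image Prod.fst, #{p ∈ triangles E | p.2.1 = b} :=
    card_eq_sum_card_fiberwise fun p hp => (mem_product.1 (mem_product.1 (mem_filter.1 hp).1).2).1
  have hdeg : (∑ b ∈ E.image Prod.fst, (inDegree E b + outDegree E b) : ℝ) ≤ 2 * #E := by
    rw [sum_add_distrib, two_mul]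
    exact_mod_cast add_le_add (sum_inDegree_le E _) (sum_outDegree_le E _)
  calc (#(triangles E) : ℝ)
      = ∑ b ∈ E.image Prod.fst, (#{p ∈ triangles E | p.2.1 = b} : ℝ) := by
        exact_mod_cast hfib
    _ ≤ ∑ b ∈ E.image Prod.fst, √(#E : ℝ) * ((inDegree E b + outDegree E b) / 2) := by
        refine sum_le_sum fun b _ => le_sqrt_mul_add_div_two (by positivity) (by positivity)
          (by positivity) ?_ ?_
        · exact_mod_cast card_triangles_filter_middle_le_mul E b
        · exact_mod_cast card_triangles_filter_middle_le_card E b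
    _ = √(#E : ℝ) * (∑ b ∈ E.image Prod.fst, (inDegree E b + outDegree E b : ℝ)) / 2 := by
        rw [← mul_sum, ← sum_div, mul_div_assoc]
    _ ≤ √(#E : ℝ) * (2 * #E) / 2 := by gcongr
    _ = #E * √(#E : ℝ) := by ring

/-- AGM bound for the triangle query: for a finite directed graph with edge set
`E` of size `IN`, the number of ordered triangles `(a₁,a₂,a₃)` with
`(a₁,a₂), (a₂,a₃), (a₃,a₁) ∈ E` is at most `IN^(3/2)`. -/
theorem triangle_agm_bound {V : Type*} (E : Finset (V × V)) :
    (({p : V × V × V | (p.1, p.2.1) ∈ E ∧ (p.2.1, p.2.2) ∈ E ∧ (p.2.2, p.1) ∈ E}.ncard : ℝ))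
      ≤ (E.card : ℝ) ^ ((3 : ℝ) / 2) := by
  classical
  have hcard : (#E : ℝ) ^ ((3 : ℝ) / 2) = #E * √(#E : ℝ) := by
    rw [show (3 : ℝ) / 2 = 1 + 1 / 2 by norm_num, Real.rpow_add' (by positivity) (by norm_num),
      Real.rpow_one, Real.sqrt_eq_rpow]
  rw [← coe_triangles, Set.ncard_coe_finset, hcard]
  exact card_triangles_le E
end

section
/- For any finite directed graph with IN edges, the number of open triangles (paths a₁→a₂→a₃) can be as large as Θ(IN²) while the number of closed triangles is at most IN^{3/2}; hence any algorithm that materializes all open triangles as an intermediate result has worst-case cost Ω(IN²), asymptotically larger than IN^{3/2} as IN → ∞. -/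
/-!
The star with centre `0` and leaves `1, …, n` (edges in both directions) has `IN = 2n` edges.
It has no closed triangle, since every edge has the centre as exactly one endpoint and a
triangle would have to alternate between centre and leaves along an odd cycle. But every pair
of leaves `(i, j)` gives the open triangle `i → 0 → j`, so there are at least
`n² = IN² / 4` open triangles, which outgrows `IN^(3/2)`.
-/

open Filter

def openTriangles (E : Finset (ℕ × ℕ)) : Set (ℕ × ℕ × ℕ) :=
  {p | (p.1, p.2.1) ∈ E ∧ (p.2.1, p.2.2) ∈ E}

def closedTriangles (E : Finset (ℕ × ℕ)) : Set (ℕ × ℕ × ℕ) :=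
  {p | (p.1, p.2.1) ∈ E ∧ (p.2.1, p.2.2) ∈ E ∧ (p.2.2, p.1) ∈ E}

theorem openTriangles_finite (E : Finset (ℕ × ℕ)) : (openTriangles E).Finite := by
  refine ((E ×ˢ E).image fun ef => (ef.1.1, ef.1.2, ef.2.2)).finite_toSet.subset ?_
  rintro ⟨a, b, c⟩ ⟨hab, hbc⟩
  exact Finset.mem_image.2 ⟨((a, b), (b, c)), Finset.mem_product.2 ⟨hab, hbc⟩, rfl⟩

def starGraph (n : ℕ) : Finset (ℕ × ℕ) :=
  (Finset.Icc 1 n ×ˢ {0}) ∪ ({0} ×ˢ Finset.Icc 1 n)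

theorem mem_starGraph {n x y : ℕ} :
    (x, y) ∈ starGraph n ↔ (1 ≤ x ∧ x ≤ n ∧ y = 0) ∨ (x = 0 ∧ 1 ≤ y ∧ y ≤ n) := by
  simp only [starGraph, Finset.mem_union, Finset.mem_product, Finset.mem_Icc,
    Finset.mem_singleton]
  tauto

theorem card_starGraph (n : ℕ) : (starGraph n).card = 2 * n := by
  rw [starGraph, Finset.card_union_of_disjoint, Finset.card_product, Finset.card_product]
  · simp only [Nat.card_Icc, Finset.card_singleton]
    omega
  · rw [Finset.disjoint_left]
    rintro ⟨x, y⟩ h h'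
    simp only [Finset.mem_product, Finset.mem_Icc, Finset.mem_singleton] at h h'
    omega

theorem closedTriangles_starGraph (n : ℕ) : closedTriangles (starGraph n) = ∅ := by
  ext ⟨a, b, c⟩
  simp only [closedTriangles, Set.mem_ofPred_eq, Set.mem_empty_iff_false, iff_false,
    mem_starGraph]
  omega

theorem sq_le_ncard_openTriangles_starGraph (n : ℕ) :
    n ^ 2 ≤ (openTriangles (starGraph n)).ncard := by
  have hleaves : ((Finset.Icc 1 n ×ˢ Finset.Icc 1 n : Finset (ℕ × ℕ)) : Set (ℕ × ℕ)).ncard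
      = n ^ 2 := by
    rw [Set.ncard_coe_finset, Finset.card_product, Nat.card_Icc, Nat.add_sub_cancel, sq]
  rw [← hleaves]
  refine Set.ncard_le_ncard_of_injOn (fun ij => (ij.1, 0, ij.2)) ?_ ?_
    (openTriangles_finite _)
  · rintro ⟨i, j⟩ hij
    simp only [Finset.coe_product, Set.mem_prod, Finset.coe_Icc, Set.mem_Icc] at hij
    exact ⟨mem_starGraph.2 (.inl ⟨hij.1.1, hij.1.2, rfl⟩), mem_starGraph.2 (.inr ⟨rfl, hij.2⟩)⟩
  · rintro ⟨i, j⟩ - ⟨i', j'⟩ - h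
    simpa [Prod.ext_iff] using h

theorem tendsto_sq_div_const_mul_rpow_three_halves {c : ℝ} (hc : 0 < c) :
    Tendsto (fun x : ℝ => x ^ 2 / (c * x) ^ ((3 : ℝ) / 2)) atTop atTop := by
  refine ((tendsto_rpow_atTop (by norm_num : (0 : ℝ) < 1 / 2)).atTop_div_const
    (Real.rpow_pos_of_pos hc ((3 : ℝ) / 2))).congr' ?_
  filter_upwards [eventually_gt_atTop 0] with x hx
  have hsplit : x ^ 2 = x ^ ((1 : ℝ) / 2) * x ^ ((3 : ℝ) / 2) := by
    rw [← Real.rpow_add hx, ← Real.rpow_natCast]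
    norm_num
  rw [Real.mul_rpow hc.le hx.le, hsplit, mul_div_mul_right _ _
    (Real.rpow_pos_of_pos hx _).ne']

/-- There is a family of directed graphs `G N` whose edge count `IN(N)` tends to
infinity, on which the number of closed triangles is always at most `IN^(3/2)`,
while the number of open triangles (paths `a₁→a₂→a₃`) divided by `IN^(3/2)`
tends to infinity; hence materializing all open triangles costs asymptotically
more than the AGM bound `IN^(3/2)`. -/
theorem open_triangles_beat_agm :
    ∃ G : ℕ → Finset (ℕ × ℕ),
      Tendsto (fun N => (G N).card) atTop atTop ∧
      (∀ N, (({p : ℕ × ℕ × ℕ |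
            (p.1, p.2.1) ∈ G N ∧ (p.2.1, p.2.2) ∈ G N ∧ (p.2.2, p.1) ∈ G N}).ncard : ℝ)
          ≤ ((G N).card : ℝ) ^ ((3 : ℝ) / 2)) ∧
      Tendsto (fun N =>
          (({p : ℕ × ℕ × ℕ | (p.1, p.2.1) ∈ G N ∧ (p.2.1, p.2.2) ∈ G N}).ncard : ℝ)
            / ((G N).card : ℝ) ^ ((3 : ℝ) / 2)) atTop atTop := by
  refine ⟨starGraph, ?_, fun n => ?_, ?_⟩
  · simp only [card_starGraph]
    exact tendsto_atTop_mono (fun n => Nat.le_mul_of_pos_left n two_pos) tendsto_id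
  · change ((closedTriangles (starGraph n)).ncard : ℝ) ≤ _
    rw [closedTriangles_starGraph, Set.ncard_empty, Nat.cast_zero]
    positivity
  · change Tendsto (fun n => ((openTriangles (starGraph n)).ncard : ℝ)
      / ((starGraph n).card : ℝ) ^ ((3 : ℝ) / 2)) atTop atTop
    refine tendsto_atTop_mono (fun n => ?_)
      ((tendsto_sq_div_const_mul_rpow_three_halves two_pos).comp tendsto_natCast_atTop_atTop)
    rw [Function.comp_apply, card_starGraph, Nat.cast_mul, Nat.cast_two]
    gcongr
    exact_mod_cast sq_le_ncard_openTriangles_starGraph n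
end

section
/- For the query Q = R(a₁,a₂,a₃), S₁(a₁,b₁), S₂(a₂,b₂), S₃(a₃,b₃), T(b₁,b₂,b₃), the fractional edge cover number ρ* equals 2 and the fractional edge packing number τ* equals 3; in particular ρ* < τ*. -/
/-!
Both values are certified by weak LP duality. Double counting gives
`∑ a, w a * load e a = ∑ i, e i * ∑ a ∈ schema i, w a` for all edge weights `e` and attribute
weights `w`. The edge cover `R = T = 1` has weight `2`, and the weight `1/3` on every attribute
puts at most `1` on each relation, so every fractional edge cover weighs at least `2`. The edge
packing `S₁ = S₂ = S₃ = 1` has weight `3`, and the attributes `a₁, b₂, b₃` meet every relation,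
so every fractional edge packing weighs at most `3`.
-/

/-- Schemas of the query `Q = R(a₁,a₂,a₃), S₁(a₁,b₁), S₂(a₂,b₂), S₃(a₃,b₃),
T(b₁,b₂,b₃)`: attributes `0,1,2` are `a₁,a₂,a₃` and `3,4,5` are `b₁,b₂,b₃`. -/
def hcSchema : Fin 5 → Finset (Fin 6) :=
  ![{0, 1, 2}, {0, 3}, {1, 4}, {2, 5}, {3, 4, 5}]

open Finset

section FractionalHypergraph

variable {ι α : Type*} [Fintype ι] [Fintype α] [DecidableEq α] (schema : ι → Finset α)

def load (e : ι → ℝ) (a : α) : ℝ :=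
  ∑ i, if a ∈ schema i then e i else 0

def fractionalEdgeCoverValues : Set ℝ :=
  {x | ∃ e : ι → ℝ, (∀ i, 0 ≤ e i) ∧ (∀ a, 1 ≤ load schema e a) ∧ x = ∑ i, e i}

def fractionalEdgePackingValues : Set ℝ :=
  {x | ∃ e : ι → ℝ, (∀ i, 0 ≤ e i) ∧ (∀ a, load schema e a ≤ 1) ∧ x = ∑ i, e i}

theorem sum_mul_load (w : α → ℝ) (e : ι → ℝ) :
    ∑ a, w a * load schema e a = ∑ i, e i * ∑ a ∈ schema i, w a := by
  simp only [load, Finset.mul_sum, mul_ite, mul_zero]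
  rw [Finset.sum_comm]
  refine Finset.sum_congr rfl fun i _ => ?_
  rw [← Finset.sum_filter, Finset.filter_mem_eq_inter, Finset.univ_inter]
  exact Finset.sum_congr rfl fun a _ => mul_comm _ _

theorem sum_le_of_mem_fractionalEdgeCoverValues {y : α → ℝ} (hy : ∀ a, 0 ≤ y a)
    (hy_packing : ∀ i, ∑ a ∈ schema i, y a ≤ 1) {x : ℝ}
    (hx : x ∈ fractionalEdgeCoverValues schema) : ∑ a, y a ≤ x := by
  obtain ⟨e, he, hcover, rfl⟩ := hx
  calc ∑ a, y a ≤ ∑ a, y a * load schema e a :=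
        sum_le_sum fun a _ => le_mul_of_one_le_right (hy a) (hcover a)
    _ = ∑ i, e i * ∑ a ∈ schema i, y a := sum_mul_load schema y e
    _ ≤ ∑ i, e i := sum_le_sum fun i _ => mul_le_of_le_one_right (he i) (hy_packing i)

theorem le_sum_of_mem_fractionalEdgePackingValues {z : α → ℝ} (hz : ∀ a, 0 ≤ z a)
    (hz_cover : ∀ i, 1 ≤ ∑ a ∈ schema i, z a) {x : ℝ}
    (hx : x ∈ fractionalEdgePackingValues schema) : x ≤ ∑ a, z a := by
  obtain ⟨e, he, hpacking, rfl⟩ := hx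
  calc ∑ i, e i ≤ ∑ i, e i * ∑ a ∈ schema i, z a :=
        sum_le_sum fun i _ => le_mul_of_one_le_right (he i) (hz_cover i)
    _ = ∑ a, z a * load schema e a := (sum_mul_load schema z e).symm
    _ ≤ ∑ a, z a := sum_le_sum fun a _ => mul_le_of_le_one_right (hz a) (hpacking a)

theorem isLeast_fractionalEdgeCoverValues {x : ℝ} {e : ι → ℝ} {y : α → ℝ}
    (he : ∀ i, 0 ≤ e i) (hcover : ∀ a, 1 ≤ load schema e a) (he_sum : ∑ i, e i = x)
    (hy : ∀ a, 0 ≤ y a) (hy_packing : ∀ i, ∑ a ∈ schema i, y a ≤ 1) (hy_sum : ∑ a, y a = x) :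
    IsLeast (fractionalEdgeCoverValues schema) x :=
  ⟨⟨e, he, hcover, he_sum.symm⟩, fun _ hx' =>
    hy_sum ▸ sum_le_of_mem_fractionalEdgeCoverValues schema hy hy_packing hx'⟩

theorem isGreatest_fractionalEdgePackingValues {x : ℝ} {e : ι → ℝ} {z : α → ℝ}
    (he : ∀ i, 0 ≤ e i) (hpacking : ∀ a, load schema e a ≤ 1) (he_sum : ∑ i, e i = x)
    (hz : ∀ a, 0 ≤ z a) (hz_cover : ∀ i, 1 ≤ ∑ a ∈ schema i, z a) (hz_sum : ∑ a, z a = x) :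
    IsGreatest (fractionalEdgePackingValues schema) x :=
  ⟨⟨e, he, hpacking, he_sum.symm⟩, fun _ hx' =>
    hz_sum ▸ le_sum_of_mem_fractionalEdgePackingValues schema hz hz_cover hx'⟩

end FractionalHypergraph

/-- For this query the fractional edge cover number `ρ*` equals `2` and the
fractional edge packing number `τ*` equals `3`; in particular `ρ* < τ*`. -/
theorem hypercube_example_cover_packing :
    IsLeast {x : ℝ | ∃ e : Fin 5 → ℝ, (∀ i, 0 ≤ e i) ∧
        (∀ a : Fin 6, 1 ≤ ∑ i, if a ∈ hcSchema i then e i else 0) ∧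
        x = ∑ i, e i} 2 ∧
    IsGreatest {x : ℝ | ∃ e : Fin 5 → ℝ, (∀ i, 0 ≤ e i) ∧
        (∀ a : Fin 6, (∑ i, if a ∈ hcSchema i then e i else 0) ≤ 1) ∧
        x = ∑ i, e i} 3 ∧
    (2 : ℝ) < 3 := by
  have cover : IsLeast (fractionalEdgeCoverValues hcSchema) 2 :=
    isLeast_fractionalEdgeCoverValues hcSchema (e := ![1, 0, 0, 0, 1]) (y := fun _ => 1 / 3)
      (by intro i; fin_cases i <;> norm_num)
      (by intro a; fin_cases a <;> simp [load, hcSchema, Fin.sum_univ_five])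
      (by simp [Fin.sum_univ_five]; norm_num)
      (fun _ => by norm_num)
      (by intro i; fin_cases i <;> simp [hcSchema] <;> norm_num)
      (by norm_num)
  have packing : IsGreatest (fractionalEdgePackingValues hcSchema) 3 :=
    isGreatest_fractionalEdgePackingValues hcSchema (e := ![0, 1, 1, 1, 0])
      (z := ![1, 0, 0, 0, 1, 1])
      (by intro i; fin_cases i <;> norm_num)
      (by intro a; fin_cases a <;> simp [load, hcSchema, Fin.sum_univ_five])
      (by simp [Fin.sum_univ_five]; norm_num)
      (by intro a; fin_cases a <;> norm_num)
      (by intro i; fin_cases i <;> simp [hcSchema])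
      (by simp [Fin.sum_univ_six]; norm_num)
  exact ⟨cover, packing, by norm_num⟩
end

section
/- Adversarial weighted balls-into-bins reduction: among all choices of nonnegative weights z₁,...,z_K ∈ [0, w] with fixed total Σzᵢ = T, where each ball is thrown independently uniformly at random into w bins, the distribution of the maximum bin load under the weight assignment giving weight w to T/w balls and weight 0 to the rest stochastically dominates (in expectation of the maximum load) every other weight assignment. -/
open scoped Classical

/-- The maximum bin load: for an assignment `f` of the `K` balls (with weights
`z`) to the `w` bins, the largest total weight received by any bin. -/
noncomputable def maxLoad {K w : ℕ} (hw : 0 < w) (z : Fin K → ℝ)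
    (f : Fin K → Fin w) : ℝ :=
  Finset.univ.sup' (Finset.univ_nonempty_iff.mpr ⟨⟨0, hw⟩⟩)
    (fun b => ∑ i ∈ Finset.univ.filter fun i => f i = b, z i)

noncomputable def F {K w : ℕ} (hw : 0 < w) (z : Fin K → ℝ) : ℝ :=
  ∑ f : Fin K → Fin w, maxLoad hw z f

lemma maxLoad_comp_perm {K w : ℕ} (hw : 0 < w) (σ : Equiv.Perm (Fin K))
    (z : Fin K → ℝ) (f : Fin K → Fin w) :
    maxLoad hw (z ∘ σ) f = maxLoad hw z (f ∘ σ.symm) := by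
  unfold maxLoad
  congr 1
  funext b
  rw [Finset.sum_filter, Finset.sum_filter]
  exact Fintype.sum_equiv σ _ _ (fun x => by simp)

lemma F_comp_perm {K w : ℕ} (hw : 0 < w) (σ : Equiv.Perm (Fin K)) (z : Fin K → ℝ) :
    F hw (z ∘ σ) = F hw z := by
  unfold F
  rw [show (∑ f : Fin K → Fin w, maxLoad hw (z ∘ σ) f)
      = ∑ f : Fin K → Fin w, maxLoad hw z (f ∘ σ.symm) from
    Finset.sum_congr rfl fun f _ => maxLoad_comp_perm hw σ z f]
  exact Fintype.sum_equiv (Equiv.arrowCongr σ (Equiv.refl (Fin w))) _ _ (fun f => by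
    simp [Equiv.arrowCongr])

lemma maxLoad_convex {K w : ℕ} (hw : 0 < w) (a b : ℝ) (ha : 0 ≤ a) (hb : 0 ≤ b)
    (x y : Fin K → ℝ) (f : Fin K → Fin w) :
    maxLoad hw (fun i => a * x i + b * y i) f
      ≤ a * maxLoad hw x f + b * maxLoad hw y f := by
  unfold maxLoad
  apply Finset.sup'_le
  intro c _
  rw [Finset.sum_add_distrib, ← Finset.mul_sum, ← Finset.mul_sum]
  have h1 : (∑ i ∈ Finset.univ.filter fun i => f i = c, x i)
      ≤ Finset.univ.sup' _ (fun b => ∑ i ∈ Finset.univ.filter fun i => f i = b, x i) :=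
    Finset.le_sup' (fun b => ∑ i ∈ Finset.univ.filter fun i => f i = b, x i) (Finset.mem_univ c)
  have h2 : (∑ i ∈ Finset.univ.filter fun i => f i = c, y i)
      ≤ Finset.univ.sup' _ (fun b => ∑ i ∈ Finset.univ.filter fun i => f i = b, y i) :=
    Finset.le_sup' (fun b => ∑ i ∈ Finset.univ.filter fun i => f i = b, y i) (Finset.mem_univ c)
  exact add_le_add (mul_le_mul_of_nonneg_left h1 ha) (mul_le_mul_of_nonneg_left h2 hb)

lemma F_convex {K w : ℕ} (hw : 0 < w) (a b : ℝ) (ha : 0 ≤ a) (hb : 0 ≤ b) (hab : a + b = 1)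
    (x y : Fin K → ℝ) :
    F hw (fun i => a * x i + b * y i) ≤ max (F hw x) (F hw y) := by
  calc F hw (fun i => a * x i + b * y i)
      ≤ ∑ f : Fin K → Fin w, (a * maxLoad hw x f + b * maxLoad hw y f) :=
        Finset.sum_le_sum fun f _ => maxLoad_convex hw a b ha hb x y f
    _ = a * F hw x + b * F hw y := by
        rw [Finset.sum_add_distrib, ← Finset.mul_sum, ← Finset.mul_sum]; rfl
    _ ≤ a * max (F hw x) (F hw y) + b * max (F hw x) (F hw y) :=
        add_le_add (mul_le_mul_of_nonneg_left (le_max_left _ _) ha)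
          (mul_le_mul_of_nonneg_left (le_max_right _ _) hb)
    _ = max (F hw x) (F hw y) := by rw [← add_mul, hab, one_mul]

lemma card_filter_lt {K t : ℕ} (htK : t ≤ K) :
    (Finset.univ.filter fun i : Fin K => (i : ℕ) < t).card = t := by
  have : (Finset.univ.filter fun i : Fin K => (i : ℕ) < t)
      = Finset.map (Fin.castLEEmb htK) Finset.univ := by
    ext i
    simp only [Finset.mem_filter, Finset.mem_univ, true_and, Finset.mem_map]
    constructor
    · intro h
      exact ⟨⟨(i : ℕ), h⟩, by ext; simp⟩
    · rintro ⟨j, rfl⟩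
      simpa using j.isLt
  rw [this, Finset.card_map, Finset.card_univ, Fintype.card_fin]

lemma F_extreme {K w t : ℕ} (hw : 0 < w) (htK : t ≤ K) (z : Fin K → ℝ)
    (hzv : ∀ i, z i = 0 ∨ z i = w) (hT : ∑ i, z i = (w : ℝ) * t) :
    F hw z = F hw (fun i : Fin K => if (i : ℕ) < t then (w : ℝ) else 0) := by
  have hw0 : (0 : ℝ) < w := by exact_mod_cast hw
  set p : Fin K → Prop := fun i => (i : ℕ) < t with hp
  set q : Fin K → Prop := fun i => z i = (w : ℝ) with hq
  -- card of q-set is t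
  have hsum : ∑ i, z i = ((Finset.univ.filter q).card : ℝ) * w := by
    have : ∀ i, z i = if q i then (w : ℝ) else 0 := by
      intro i
      by_cases hqi : q i
      · rw [if_pos hqi]; exact hqi
      · simp only [hqi, if_false]
        rcases hzv i with h | h
        · exact h
        · exact absurd h hqi
    rw [Finset.sum_congr rfl (fun i _ => this i), Finset.sum_ite, Finset.sum_const,
      Finset.sum_const, smul_zero, add_zero, nsmul_eq_mul]
  have hcardq : (Finset.univ.filter q).card = t := by
    have : ((Finset.univ.filter q).card : ℝ) * w = (t : ℝ) * w := by
      rw [← hsum, hT]; ring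
    exact_mod_cast mul_right_cancel₀ hw0.ne' this
  have hcardp : (Finset.univ.filter p).card = t := card_filter_lt htK
  have hcp : Fintype.card {i // p i} = Fintype.card {i // q i} := by
    rw [Fintype.card_subtype, Fintype.card_subtype, hcardp, hcardq]
  have hcn : Fintype.card {i // ¬ p i} = Fintype.card {i // ¬ q i} := by
    have h1 := Finset.card_filter_add_card_filter_not (s := Finset.univ)
      (p := p)
    have h2 := Finset.card_filter_add_card_filter_not (s := Finset.univ)
      (p := q)
    rw [Fintype.card_subtype, Fintype.card_subtype]
    omega
  let e1 : {i // p i} ≃ {i // q i} := Fintype.equivOfCardEq hcp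
  let e2 : {i // ¬ p i} ≃ {i // ¬ q i} := Fintype.equivOfCardEq hcn
  let σ : Equiv.Perm (Fin K) := Equiv.subtypeCongr e1 e2
  have hzt : z ∘ σ = fun i : Fin K => if (i : ℕ) < t then (w : ℝ) else 0 := by
    funext i
    by_cases h : p i
    · have : σ i = (e1 ⟨i, h⟩ : Fin K) := by
        simp [σ, Equiv.subtypeCongr, h]
      simp only [Function.comp_apply, this]
      have := (e1 ⟨i, h⟩).2
      simp only [hq] at this
      simp [hp] at h
      simp [h, this]
    · have : σ i = (e2 ⟨i, h⟩ : Fin K) := by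
        simp [σ, Equiv.subtypeCongr, h]
      simp only [Function.comp_apply, this]
      have h2 := (e2 ⟨i, h⟩).2
      have h3 : z ((e2 ⟨i, h⟩ : Fin K)) = 0 := by
        rcases hzv ((e2 ⟨i, h⟩ : Fin K)) with h4 | h4
        · exact h4
        · exact absurd h4 h2
      simp only [hp] at h
      rw [if_neg h]
      exact h3
  rw [← hzt, F_comp_perm]

lemma frac_card_ne_one {K w t : ℕ} (hw : 0 < w) (z : Fin K → ℝ)
    (hz : ∀ i, 0 ≤ z i ∧ z i ≤ w) (hT : ∑ i, z i = (w : ℝ) * t) :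
    (Finset.univ.filter fun i => z i ≠ 0 ∧ z i ≠ (w : ℝ)).card ≠ 1 := by
  intro h1
  obtain ⟨i₀, hi₀⟩ := Finset.card_eq_one.mp h1
  have hw0 : (0 : ℝ) < w := by exact_mod_cast hw
  have hmem : i₀ ∈ Finset.univ.filter fun i => z i ≠ 0 ∧ z i ≠ (w : ℝ) :=
    hi₀ ▸ Finset.mem_singleton_self i₀
  obtain ⟨hne0, hnew⟩ := (Finset.mem_filter.mp hmem).2
  have hothers : ∀ k, k ≠ i₀ → z k = 0 ∨ z k = w := by
    intro k hk
    by_contra hcon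
    push_neg at hcon
    have : k ∈ Finset.univ.filter fun i => z i ≠ 0 ∧ z i ≠ (w : ℝ) :=
      Finset.mem_filter.mpr ⟨Finset.mem_univ _, hcon⟩
    rw [hi₀] at this
    exact hk (Finset.mem_singleton.mp this)
  set m := ((Finset.univ.erase i₀).filter fun k => z k = (w : ℝ)).card with hm
  have hsum2 : ∑ k ∈ Finset.univ.erase i₀, z k = (m : ℝ) * w := by
    have hpt : ∀ k ∈ Finset.univ.erase i₀, z k = if z k = (w : ℝ) then (w : ℝ) else 0 := by
      intro k hk
      rcases hothers k (Finset.ne_of_mem_erase hk) with h | h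
      · rw [h, if_neg (fun hh : (0:ℝ) = w => hw0.ne' hh.symm)]
      · rw [h, if_pos rfl]
    rw [Finset.sum_congr rfl hpt, Finset.sum_ite, Finset.sum_const, Finset.sum_const,
      smul_zero, add_zero, nsmul_eq_mul]
  have hsplit : ∑ i, z i = z i₀ + ∑ k ∈ Finset.univ.erase i₀, z k :=
    (Finset.add_sum_erase _ _ (Finset.mem_univ i₀)).symm
  have hzi : z i₀ = (w : ℝ) * ((t : ℝ) - m) := by
    rw [hT, hsum2] at hsplit; linarith [hsplit]
  have hzpos : 0 < z i₀ := lt_of_le_of_ne (hz i₀).1 (Ne.symm hne0)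
  have hzlt : z i₀ < w := lt_of_le_of_ne (hz i₀).2 hnew
  have h1' : (m : ℝ) < t := by nlinarith
  have h2' : (t : ℝ) < m + 1 := by nlinarith
  have hm1 : m < t := by exact_mod_cast h1'
  have hm2 : t < m + 1 := by exact_mod_cast h2'
  omega

lemma sum_two_update {K : ℕ} {i j : Fin K} (hij : i ≠ j) (z : Fin K → ℝ) (c d : ℝ) :
    ∑ k, (if k = i then z i + c else if k = j then z j + d else z k)
      = (∑ k, z k) + c + d := by
  have hpt : ∀ k, (if k = i then z i + c else if k = j then z j + d else z k)
      = z k + ((if k = i then c else 0) + (if k = j then d else 0)) := by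
    intro k
    by_cases h1 : k = i
    · subst h1; rw [if_pos rfl, if_pos rfl, if_neg hij]; ring
    · by_cases h2 : k = j
      · subst h2; rw [if_neg h1, if_pos rfl, if_neg h1, if_pos rfl]; ring
      · rw [if_neg h1, if_neg h2, if_neg h1, if_neg h2]; ring
  rw [Finset.sum_congr rfl fun k _ => hpt k, Finset.sum_add_distrib,
    Finset.sum_add_distrib, Finset.sum_ite_eq' Finset.univ i fun _ => c,
    Finset.sum_ite_eq' Finset.univ j fun _ => d, if_pos (Finset.mem_univ i),
    if_pos (Finset.mem_univ j)]
  ring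

lemma key {K w t : ℕ} (hw : 0 < w) (htK : t ≤ K) :
    ∀ n (z : Fin K → ℝ),
      (Finset.univ.filter fun i => z i ≠ 0 ∧ z i ≠ (w : ℝ)).card ≤ n →
      (∀ i, 0 ≤ z i ∧ z i ≤ w) → (∑ i, z i = (w : ℝ) * t) →
      F hw z ≤ F hw (fun i : Fin K => if (i : ℕ) < t then (w : ℝ) else 0) := by
  intro n
  induction n with
  | zero =>
    intro z hcard hz hT
    have hzv : ∀ i, z i = 0 ∨ z i = w := by
      intro i
      by_contra hcon
      push_neg at hcon
      have hmem : i ∈ Finset.univ.filter fun i => z i ≠ 0 ∧ z i ≠ (w : ℝ) :=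
        Finset.mem_filter.mpr ⟨Finset.mem_univ _, hcon⟩
      have := Finset.card_pos.mpr ⟨i, hmem⟩
      omega
    exact le_of_eq (F_extreme hw htK z hzv hT)
  | succ n ih =>
    intro z hcard hz hT
    by_cases hle : (Finset.univ.filter fun i => z i ≠ 0 ∧ z i ≠ (w : ℝ)).card ≤ n
    · exact ih z hle hz hT
    have hw0 : (0 : ℝ) < w := by exact_mod_cast hw
    have h2 : 1 < (Finset.univ.filter fun i => z i ≠ 0 ∧ z i ≠ (w : ℝ)).card := by
      have := frac_card_ne_one hw z hz hT
      omega
    obtain ⟨i, hi, j, hj, hij⟩ := Finset.one_lt_card.mp h2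
    obtain ⟨hi0, hiw⟩ := (Finset.mem_filter.mp hi).2
    obtain ⟨hj0, hjw⟩ := (Finset.mem_filter.mp hj).2
    have hilb : 0 < z i := lt_of_le_of_ne (hz i).1 (Ne.symm hi0)
    have hiub : z i < w := lt_of_le_of_ne (hz i).2 hiw
    have hjlb : 0 < z j := lt_of_le_of_ne (hz j).1 (Ne.symm hj0)
    have hjub : z j < w := lt_of_le_of_ne (hz j).2 hjw
    set δ : ℝ := min ((w : ℝ) - z i) (z j) with hδ
    set ε : ℝ := min (z i) ((w : ℝ) - z j) with hε
    have hδ0 : 0 < δ := lt_min (by linarith) hjlb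
    have hε0 : 0 < ε := lt_min hilb (by linarith)
    have hδ1 : δ ≤ (w : ℝ) - z i := min_le_left _ _
    have hδ2 : δ ≤ z j := min_le_right _ _
    have hε1 : ε ≤ z i := min_le_left _ _
    have hε2 : ε ≤ (w : ℝ) - z j := min_le_right _ _
    set x : Fin K → ℝ := fun k => if k = i then z i + δ else if k = j then z j - δ else z k
      with hx
    set y : Fin K → ℝ := fun k => if k = i then z i - ε else if k = j then z j + ε else z k
      with hy
    have hxi : x i = z i + δ := by simp only [hx]; rw [if_pos trivial]
    have hxj : x j = z j - δ := by simp only [hx]; rw [if_neg (Ne.symm hij), if_pos trivial]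
    have hxo : ∀ k, k ≠ i → k ≠ j → x k = z k := by
      intro k h1 h2; simp only [hx]; rw [if_neg h1, if_neg h2]
    have hyi : y i = z i - ε := by simp only [hy]; rw [if_pos trivial]
    have hyj : y j = z j + ε := by simp only [hy]; rw [if_neg (Ne.symm hij), if_pos trivial]
    have hyo : ∀ k, k ≠ i → k ≠ j → y k = z k := by
      intro k h1 h2; simp only [hy]; rw [if_neg h1, if_neg h2]
    have hδε : (0 : ℝ) < δ + ε := by linarith
    set a : ℝ := ε / (δ + ε) with ha
    set b : ℝ := δ / (δ + ε) with hb
    have ha0 : 0 ≤ a := div_nonneg hε0.le hδε.le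
    have hb0 : 0 ≤ b := div_nonneg hδ0.le hδε.le
    have hab : a + b = 1 := by rw [ha, hb]; field_simp; ring
    have hzc : z = fun k => a * x k + b * y k := by
      funext k
      by_cases h1 : k = i
      · rw [h1, hxi, hyi, ha, hb]
        field_simp
        ring
      · by_cases h2 : k = j
        · rw [h2, hxj, hyj, ha, hb]
          field_simp
          ring
        · rw [hxo k h1 h2, hyo k h1 h2, ← add_mul, hab, one_mul]
    -- subset facts
    have hsubx : (Finset.univ.filter fun k => x k ≠ 0 ∧ x k ≠ (w : ℝ))
        ⊆ Finset.univ.filter fun k => z k ≠ 0 ∧ z k ≠ (w : ℝ) := by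
      intro k hk
      by_cases h1 : k = i
      · rw [h1]; exact hi
      · by_cases h2 : k = j
        · rw [h2]; exact hj
        · obtain ⟨-, hk2⟩ := Finset.mem_filter.mp hk
          rw [hxo k h1 h2] at hk2
          exact Finset.mem_filter.mpr ⟨Finset.mem_univ _, hk2⟩
    have hsuby : (Finset.univ.filter fun k => y k ≠ 0 ∧ y k ≠ (w : ℝ))
        ⊆ Finset.univ.filter fun k => z k ≠ 0 ∧ z k ≠ (w : ℝ) := by
      intro k hk
      by_cases h1 : k = i
      · rw [h1]; exact hi
      · by_cases h2 : k = j
        · rw [h2]; exact hj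
        · obtain ⟨-, hk2⟩ := Finset.mem_filter.mp hk
          rw [hyo k h1 h2] at hk2
          exact Finset.mem_filter.mpr ⟨Finset.mem_univ _, hk2⟩
    have hdropx : ∃ k, k ∈ (Finset.univ.filter fun k => z k ≠ 0 ∧ z k ≠ (w : ℝ)) ∧
        k ∉ (Finset.univ.filter fun k => x k ≠ 0 ∧ x k ≠ (w : ℝ)) := by
      rcases min_cases ((w : ℝ) - z i) (z j) with ⟨hmin, -⟩ | ⟨hmin, -⟩
      · refine ⟨i, hi, fun hmem => ?_⟩
        obtain ⟨-, -, hne⟩ := Finset.mem_filter.mp hmem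
        apply hne
        rw [hxi, hδ, hmin]
        ring
      · refine ⟨j, hj, fun hmem => ?_⟩
        obtain ⟨-, hne, -⟩ := Finset.mem_filter.mp hmem
        apply hne
        rw [hxj, hδ, hmin]
        ring
    have hdropy : ∃ k, k ∈ (Finset.univ.filter fun k => z k ≠ 0 ∧ z k ≠ (w : ℝ)) ∧
        k ∉ (Finset.univ.filter fun k => y k ≠ 0 ∧ y k ≠ (w : ℝ)) := by
      rcases min_cases (z i) ((w : ℝ) - z j) with ⟨hmin, -⟩ | ⟨hmin, -⟩
      · refine ⟨i, hi, fun hmem => ?_⟩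
        obtain ⟨-, hne, -⟩ := Finset.mem_filter.mp hmem
        apply hne
        rw [hyi, hε, hmin]
        ring
      · refine ⟨j, hj, fun hmem => ?_⟩
        obtain ⟨-, -, hne⟩ := Finset.mem_filter.mp hmem
        apply hne
        rw [hyj, hε, hmin]
        ring
    have hcardx : (Finset.univ.filter fun k => x k ≠ 0 ∧ x k ≠ (w : ℝ)).card ≤ n := by
      obtain ⟨k, hk1, hk2⟩ := hdropx
      have := Finset.card_lt_card ((Finset.ssubset_iff_of_subset hsubx).mpr ⟨k, hk1, hk2⟩)
      omega
    have hcardy : (Finset.univ.filter fun k => y k ≠ 0 ∧ y k ≠ (w : ℝ)).card ≤ n := by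
      obtain ⟨k, hk1, hk2⟩ := hdropy
      have := Finset.card_lt_card ((Finset.ssubset_iff_of_subset hsuby).mpr ⟨k, hk1, hk2⟩)
      omega
    have hzx : ∀ k, 0 ≤ x k ∧ x k ≤ w := by
      intro k
      by_cases h1 : k = i
      · rw [h1, hxi]
        constructor <;> [linarith [(hz i).1]; linarith]
      · by_cases h2 : k = j
        · rw [h2, hxj]
          constructor <;> [linarith; linarith [(hz j).2]]
        · rw [hxo k h1 h2]; exact hz k
    have hzy : ∀ k, 0 ≤ y k ∧ y k ≤ w := by
      intro k
      by_cases h1 : k = i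
      · rw [h1, hyi]
        constructor <;> [linarith; linarith [(hz i).2]]
      · by_cases h2 : k = j
        · rw [h2, hyj]
          constructor <;> [linarith [(hz j).1]; linarith]
        · rw [hyo k h1 h2]; exact hz k
    have hTx : ∑ k, x k = (w : ℝ) * t := by
      have heq : ∀ k, x k = (if k = i then z i + δ else if k = j then z j + (-δ) else z k) := by
        intro k
        by_cases h1 : k = i
        · rw [h1, hxi, if_pos rfl]
        · by_cases h2 : k = j
          · rw [h2, hxj, if_neg (Ne.symm hij), if_pos rfl]; ring
          · rw [hxo k h1 h2, if_neg h1, if_neg h2]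
      rw [Finset.sum_congr rfl fun k _ => heq k, sum_two_update hij z δ (-δ), hT]
      ring
    have hTy : ∑ k, y k = (w : ℝ) * t := by
      have heq : ∀ k, y k = (if k = i then z i + (-ε) else if k = j then z j + ε else z k) := by
        intro k
        by_cases h1 : k = i
        · rw [h1, hyi, if_pos rfl]; ring
        · by_cases h2 : k = j
          · rw [h2, hyj, if_neg (Ne.symm hij), if_pos rfl]
          · rw [hyo k h1 h2, if_neg h1, if_neg h2]
      rw [Finset.sum_congr rfl fun k _ => heq k, sum_two_update hij z (-ε) ε, hT]
      ring
    have hFx := ih x hcardx hzx hTx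
    have hFy := ih y hcardy hzy hTy
    calc F hw z = F hw (fun k => a * x k + b * y k) := by rw [← hzc]
      _ ≤ max (F hw x) (F hw y) := F_convex hw a b ha0 hb0 hab x y
      _ ≤ F hw (fun i : Fin K => if (i : ℕ) < t then (w : ℝ) else 0) := max_le hFx hFy

/-- Adversarial weighted balls-into-bins (Sanders, Lemma 1, expectation form):
among all weight assignments `z : Fin K → [0, w]` with total weight `T = w·t`,
the expected maximum bin load (over a uniformly random independent placement of
the balls into the `w` bins) is maximized by the all-or-nothing assignment
giving weight `w` to `t = T/w` balls and weight `0` to the rest. -/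
theorem adversarial_balls_into_bins {K w t : ℕ} (hw : 0 < w) (htK : t ≤ K)
    (z : Fin K → ℝ) (hz : ∀ i, 0 ≤ z i ∧ z i ≤ w)
    (hT : ∑ i, z i = (w : ℝ) * t) :
    (∑ f : Fin K → Fin w, maxLoad hw z f) / (Fintype.card (Fin K → Fin w) : ℝ) ≤
      (∑ f : Fin K → Fin w,
          maxLoad hw (fun i => if (i : ℕ) < t then (w : ℝ) else 0) f) /
        (Fintype.card (Fin K → Fin w) : ℝ) := by
  have hc : (0 : ℝ) < (Fintype.card (Fin K → Fin w) : ℝ) := by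
    have : 0 < Fintype.card (Fin K → Fin w) := Fintype.card_pos_iff.mpr ⟨fun _ => ⟨0, hw⟩⟩
    exact_mod_cast this
  rw [div_le_div_iff_of_pos_right hc]
  exact key hw htK (Finset.univ.filter fun i => z i ≠ 0 ∧ z i ≠ (w : ℝ)).card z le_rfl hz hT
end

section
/- For the Shares/Hypercube algorithm on the triangle query with w workers, where each dimension of the output space is divided into w^{1/3} shares and each edge (u,v) of each relation is replicated to all w^{1/3} workers sharing its two bound coordinates, the expected total communication is Θ(w^{1/3}·IN) and the expected per-worker load is Θ(IN/w^{2/3}). -/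
/-!
Routing commutes with the cyclic shift of the three attributes and of the worker coordinates,
so each relation is routed like `edge(a₁, a₂)`. A tuple `(u, v)` of that relation reaches exactly
the `s` workers `(h₁ u, h₂ v, ·)`; and a fixed worker `c` receives it for exactly a `1/s²` fraction
of the hash triples, because `h₁ u` and `h₂ v` are independent and uniform. Summing over the tuples
(double counting of tuple–worker, resp. tuple–hash incidences) gives both claims.
-/

/-- The number of tuples received by worker `c` of the `s × s × s` Hypercube for
the triangle query, under hash functions `h = (h₁, h₂, h₃)`: a tuple `(u,v)` of
relation `edge(aᵢ, aⱼ)` is sent to every worker whose `i`-th and `j`-th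
coordinates match the hashed values. -/
def hcLoad {V : Type*} [DecidableEq V] (s : ℕ) (E₁ E₂ E₃ : Finset (V × V))
    (h : (V → Fin s) × (V → Fin s) × (V → Fin s))
    (c : Fin s × Fin s × Fin s) : ℕ :=
  (E₁.filter fun p => h.1 p.1 = c.1 ∧ h.2.1 p.2 = c.2.1).card +
  (E₂.filter fun p => h.2.1 p.1 = c.2.1 ∧ h.2.2 p.2 = c.2.2).card +
  (E₃.filter fun p => h.2.2 p.1 = c.2.2 ∧ h.1 p.2 = c.1).card

open Finset Fintype

lemma Finset.sum_card_filter_comm {α β : Type*} (s : Finset α) (t : Finset β) (r : α → β → Prop)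
    [∀ a b, Decidable (r a b)] :
    ∑ b ∈ t, #{a ∈ s | r a b} = ∑ a ∈ s, #{b ∈ t | r a b} :=
  (sum_card_bipartiteAbove_eq_sum_card_bipartiteBelow r).symm

lemma card_filter_fst_and_snd_fst {α β γ : Type*} [Fintype α] [Fintype β] [Fintype γ]
    (P : α → Prop) (Q : β → Prop) [DecidablePred P] [DecidablePred Q] :
    #{x : α × β × γ | P x.1 ∧ Q x.2.1} = #{a | P a} * #{b | Q b} * card γ := by
  have : ({x : α × β × γ | P x.1 ∧ Q x.2.1} : Finset (α × β × γ)) =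
      ({a | P a} : Finset α) ×ˢ (({b | Q b} : Finset β) ×ˢ univ) := by
    ext; simp
  rw [this, card_product, card_product, card_univ, mul_assoc]

lemma card_filter_apply_eq_mul_card {V β : Type*} [Fintype V] [DecidableEq V] [Fintype β]
    [DecidableEq β] (u : V) (b : β) :
    #{f : V → β | f u = b} * card β = card (V → β) := by
  have hV : 0 < card V := card_pos_iff.mpr ⟨u⟩
  have := card_filter_piFinset_const (univ : Finset β) u b
  rw [piFinset_univ, if_pos (mem_univ b), card_univ] at this
  rw [this, card_fun, ← pow_succ, Nat.sub_add_cancel hV]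

/-- `(x₁, x₂, x₃) ↦ (x₂, x₃, x₁)` -/
def cycle3 (α : Type*) : α × α × α ≃ α × α × α :=
  (Equiv.prodComm α (α × α)).trans (Equiv.prodAssoc α α α)

section Routing

variable {V β : Type*} [DecidableEq β]

def routedTo (E : Finset (V × V)) (h : (V → β) × (V → β) × (V → β)) (c : β × β × β) :
    Finset (V × V) :=
  {p ∈ E | h.1 p.1 = c.1 ∧ h.2.1 p.2 = c.2.1}

lemma hcLoad_eq_card_routedTo [DecidableEq V] (s : ℕ) (E₁ E₂ E₃ : Finset (V × V))
    (h : (V → Fin s) × (V → Fin s) × (V → Fin s)) (c : Fin s × Fin s × Fin s) :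
    hcLoad s E₁ E₂ E₃ h c = #(routedTo E₁ h c) + #(routedTo E₂ (cycle3 _ h) (cycle3 _ c)) +
      #(routedTo E₃ ((cycle3 _).symm h) ((cycle3 _).symm c)) :=
  rfl

variable [Fintype β]

lemma sum_card_routedTo (E : Finset (V × V)) (h : (V → β) × (V → β) × (V → β)) :
    ∑ c, #(routedTo E h c) = #E * card β := by
  unfold routedTo
  rw [sum_card_filter_comm]
  refine sum_const_nat fun p _ => ?_
  rw [card_filter_fst_and_snd_fst (γ := β) (h.1 p.1 = ·) (h.2.1 p.2 = ·),
    filter_eq, filter_eq]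
  simp

lemma sum_card_routedTo_mul_sq [Fintype V] [DecidableEq V] (E : Finset (V × V)) (c : β × β × β) :
    (∑ h, #(routedTo E h c)) * card β ^ 2 = #E * card ((V → β) × (V → β) × (V → β)) := by
  unfold routedTo
  rw [sum_card_filter_comm, sum_mul]
  refine sum_const_nat fun p _ => ?_
  have hu := card_filter_apply_eq_mul_card p.1 c.1
  have hv := card_filter_apply_eq_mul_card p.2 c.2.1
  rw [card_filter_fst_and_snd_fst (γ := V → β)
    (fun f : V → β => f p.1 = c.1) (fun f : V → β => f p.2 = c.2.1)]
  calc _ = (#{f : V → β | f p.1 = c.1} * card β) * (#{f : V → β | f p.2 = c.2.1} * card β) *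
        card (V → β) := by ring
    _ = _ := by rw [hu, hv, card_prod, card_prod, mul_assoc]

end Routing

section Hypercube

variable {V : Type*} [DecidableEq V] (s : ℕ) (E₁ E₂ E₃ : Finset (V × V))

lemma sum_hcLoad_eq (h : (V → Fin s) × (V → Fin s) × (V → Fin s)) :
    ∑ c, hcLoad s E₁ E₂ E₃ h c = (#E₁ + #E₂ + #E₃) * s := by
  simp only [hcLoad_eq_card_routedTo, sum_add_distrib]
  rw [(cycle3 _).sum_comp (fun c => #(routedTo E₂ _ c)),
    (cycle3 _).symm.sum_comp (fun c => #(routedTo E₃ _ c))]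
  simp only [sum_card_routedTo, Fintype.card_fin]
  ring

lemma sum_hcLoad_mul_sq [Fintype V] (c : Fin s × Fin s × Fin s) :
    (∑ h, hcLoad s E₁ E₂ E₃ h c) * s ^ 2 =
      (#E₁ + #E₂ + #E₃) * card ((V → Fin s) × (V → Fin s) × (V → Fin s)) := by
  have key (E : Finset (V × V)) (c' : Fin s × Fin s × Fin s) :
      (∑ h, #(routedTo E h c')) * s ^ 2 = #E * card ((V → Fin s) × (V → Fin s) × (V → Fin s)) := by
    simpa only [Fintype.card_fin] using sum_card_routedTo_mul_sq E c'
  simp only [hcLoad_eq_card_routedTo, sum_add_distrib]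
  rw [(cycle3 _).sum_comp (fun h => #(routedTo E₂ h _)),
    (cycle3 _).symm.sum_comp (fun h => #(routedTo E₃ h _))]
  simp only [add_mul, key]

end Hypercube

theorem hypercube_triangle_costs_general {V : Type*} [Fintype V] [DecidableEq V]
    (s : ℕ) (E₁ E₂ E₃ : Finset (V × V)) (IN : ℕ)
    (h1 : E₁.card = IN) (h2 : E₂.card = IN) (h3 : E₃.card = IN) :
    (∀ h : (V → Fin s) × (V → Fin s) × (V → Fin s),
        ∑ c : Fin s × Fin s × Fin s, hcLoad s E₁ E₂ E₃ h c = 3 * IN * s) ∧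
    (∀ c : Fin s × Fin s × Fin s,
        (∑ h : (V → Fin s) × (V → Fin s) × (V → Fin s),
            (hcLoad s E₁ E₂ E₃ h c : ℝ))
          / (Fintype.card ((V → Fin s) × (V → Fin s) × (V → Fin s)) : ℝ)
          = 3 * IN / s ^ 2) := by
  refine ⟨fun h => ?_, fun c => ?_⟩
  · rw [sum_hcLoad_eq, h1, h2, h3]
    ring
  · have : Nonempty (Fin s) := ⟨c.1⟩
    have hs : (s : ℝ) ≠ 0 := Nat.cast_ne_zero.mpr c.1.pos.ne'
    have hH : (card ((V → Fin s) × (V → Fin s) × (V → Fin s)) : ℝ) ≠ 0 :=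
      Nat.cast_ne_zero.mpr card_ne_zero
    rw [div_eq_div_iff hH (pow_ne_zero 2 hs)]
    have hload := sum_hcLoad_mul_sq s E₁ E₂ E₃ c
    rw [h1, h2, h3] at hload
    exact_mod_cast hload.trans (by ring)

/-- Shares/Hypercube for the triangle query with `w = s³` workers, each relation
of size `IN`: (i) for any hash functions the total communication is exactly
`3·IN·s = Θ(w^{1/3}·IN)`; (ii) for each worker, the expected load over
independent uniformly random hash functions `h₁, h₂, h₃` is exactly
`3·IN/s² = Θ(IN/w^{2/3})`. -/
theorem hypercube_triangle_costs {V : Type*} [Fintype V] [DecidableEq V]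
    (s : ℕ) (hs : 0 < s) (E₁ E₂ E₃ : Finset (V × V)) (IN : ℕ)
    (h1 : E₁.card = IN) (h2 : E₂.card = IN) (h3 : E₃.card = IN) :
    (∀ h : (V → Fin s) × (V → Fin s) × (V → Fin s),
        ∑ c : Fin s × Fin s × Fin s, hcLoad s E₁ E₂ E₃ h c = 3 * IN * s) ∧
    (∀ c : Fin s × Fin s × Fin s,
        (∑ h : (V → Fin s) × (V → Fin s) × (V → Fin s),
            (hcLoad s E₁ E₂ E₃ h c : ℝ))
          / (Fintype.card ((V → Fin s) × (V → Fin s) × (V → Fin s)) : ℝ)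
          = 3 * IN / s ^ 2) :=
  hypercube_triangle_costs_general s E₁ E₂ E₃ IN h1 h2 h3
end

section
/- In any directed graph where every edge (u,v) satisfies u ≺ v for a total order ≺ obtained by sorting vertices by degree (ties broken by id) in the underlying undirected graph with IN edges, every vertex has out-degree at most √(2·IN). -/
open scoped Classical

/-- The degree-then-id strict total order used for orienting edges:
`u ≺ v` iff `deg u < deg v`, or `deg u = deg v` and `u < v`. -/
noncomputable def DegOrder {V : Type*} [Fintype V] [LinearOrder V]
    (G : SimpleGraph V) (u v : V) : Prop :=
  G.degree u < G.degree v ∨ (G.degree u = G.degree v ∧ u < v)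

/-- In the orientation of an undirected graph with `IN` edges where each edge
points from its smaller endpoint to its larger endpoint under the
degree-then-id order, every vertex has out-degree at most `√(2·IN)`. -/
theorem degree_orientation_outdegree_bound {V : Type*} [Fintype V]
    [LinearOrder V] (G : SimpleGraph V) (u : V) :
    (({v : V | G.Adj u v ∧ DegOrder G u v}.ncard : ℝ)) ≤
      Real.sqrt (2 * G.edgeFinset.card) := by
  classical
  set S : Finset V := Finset.univ.filter (fun v => G.Adj u v ∧ DegOrder G u v) with hS
  have hset : {v : V | G.Adj u v ∧ DegOrder G u v} = ↑S := by
    ext v; simp [hS]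
  rw [hset, Set.ncard_coe_finset]
  have hsub : S ⊆ G.neighborFinset u := by
    intro v hv
    simp only [hS, Finset.mem_filter] at hv
    simpa using hv.2.1
  have hcard : S.card ≤ G.degree u := by
    simpa [SimpleGraph.card_neighborFinset_eq_degree] using Finset.card_le_card hsub
  have hdeg : ∀ v ∈ S, G.degree u ≤ G.degree v := by
    intro v hv
    simp only [hS, Finset.mem_filter] at hv
    rcases hv.2.2 with h | h
    · exact h.le
    · exact h.1.le
  have hsum : S.card * S.card ≤ 2 * G.edgeFinset.card := by
    calc S.card * S.card ≤ S.card * G.degree u := Nat.mul_le_mul_left _ hcard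
    _ = ∑ _v ∈ S, G.degree u := by rw [Finset.sum_const, smul_eq_mul]
    _ ≤ ∑ v ∈ S, G.degree v := Finset.sum_le_sum hdeg
    _ ≤ ∑ v, G.degree v := Finset.sum_le_sum_of_subset (Finset.subset_univ S)
    _ = 2 * G.edgeFinset.card := G.sum_degrees_eq_twice_card_edges
  have h0 : (0:ℝ) ≤ S.card := Nat.cast_nonneg _
  rw [show ((S.card : ℝ)) = Real.sqrt (S.card * S.card) by
        rw [Real.sqrt_mul_self h0]]
  apply Real.sqrt_le_sqrt
  exact_mod_cast hsum
end

section
/- Triangle counting via degree orientation is worst-case optimal: orienting the edges of an undirected graph with IN edges by the degree order and, for each oriented edge (u,v), intersecting the out-neighborhoods of u and v (taking time proportional to the smaller out-neighborhood) counts all triangles in total time O(IN^{3/2}). -/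
open scoped Classical

/-- Out-neighbourhood size of `u` in the degree orientation of `G`. -/
noncomputable def outDeg {V : Type*} [Fintype V] [LinearOrder V]
    (G : SimpleGraph V) (u : V) : ℕ :=
  {v : V | G.Adj u v ∧ DegOrder G u v}.ncard

/-!
Orient every edge of `G` from its `≺`-smaller to its `≺`-larger endpoint, where `≺` orders
vertices by degree. An out-neighbour `v` of `u` has `deg v ≥ deg u ≥ |N⁺(u)|`, so
`|N⁺(u)|² ≤ ∑_{v ∈ N⁺(u)} deg v ≤ 2m`; hence each of the `m` oriented edges costs at
most `√(2m)`. Since `≺` is a strict total order, every edge gets exactly one orientation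
and every triangle exactly one ordering `a ≺ b ≺ c` of its vertices.
-/

open Finset

section StrictTotalOrder

variable {V : Type*} {r : V → V → Prop} [IsStrictTotalOrder V r]

theorem eq_of_rel_of_insert_eq [DecidableEq V] {a b c a' b' c' : V} (hab : r a b) (hbc : r b c)
    (hab' : r a' b') (hbc' : r b' c') (h : ({a, b, c} : Finset V) = {a', b', c'}) :
    (a, b, c) = (a', b', c') := by
  have hl : [a, b, c] = [a', b', c'] :=
    List.Pairwise.eq_of_mem_iff (r := r) (by simp [hab, hbc, _root_.trans hab hbc])
      (by simp [hab', hbc', _root_.trans hab' hbc']) (by simpa [Finset.ext_iff] using h)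
  simpa using hl

theorem exists_rel_rel_insert_eq [DecidableEq V] {a b c : V} (hab : a ≠ b) (hac : a ≠ c)
    (hbc : b ≠ c) : ∃ x y z, r x y ∧ r y z ∧ ({x, y, z} : Finset V) = {a, b, c} := by
  wlog hrab : r a b generalizing a b
  · have hrba : r b a := ((trichotomous_of r a b).resolve_left hrab).resolve_left hab
    obtain ⟨x, y, z, hxy, hyz, hs⟩ := this hab.symm hbc hac hrba
    exact ⟨x, y, z, hxy, hyz, hs.trans (insert_comm _ _ _)⟩
  rcases trichotomous_of r b c with hrbc | rfl | hrcb
  · exact ⟨a, b, c, hrab, hrbc, rfl⟩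
  · exact (hbc rfl).elim
  rcases trichotomous_of r a c with hrac | rfl | hrca
  · exact ⟨a, c, b, hrac, hrcb, by rw [pair_comm]⟩
  · exact (hac rfl).elim
  · exact ⟨c, a, b, hrca, hrab, by rw [insert_comm, pair_comm c b, insert_comm]⟩

end StrictTotalOrder

namespace SimpleGraph

variable {V : Type*} [Fintype V] (G : SimpleGraph V)

theorem card_filter_adj_rel_eq_card_edgeFinset (r : V → V → Prop) [IsStrictTotalOrder V r] :
    #{p : V × V | G.Adj p.1 p.2 ∧ r p.1 p.2} = #G.edgeFinset := by
  refine card_bij (fun p _ ↦ s(p.1, p.2))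
    (fun p hp ↦ by simpa using (mem_filter.1 hp).2.1) ?_ ?_
  · rintro ⟨a, b⟩ hab ⟨c, d⟩ hcd h
    rcases Sym2.eq_iff.1 h with h | ⟨rfl, rfl⟩
    · simpa using h
    · exact absurd (mem_filter.1 hcd).2.2 (asymm (mem_filter.1 hab).2.2)
  · rintro e he
    induction e with | _ a b =>
    have hab : G.Adj a b := by simpa using he
    rcases trichotomous_of r a b with h | rfl | h
    · exact ⟨(a, b), by simp [hab, h], rfl⟩
    · exact (G.irrefl hab).elim
    · exact ⟨(b, a), by simp [hab.symm, h], Sym2.eq_swap⟩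

theorem ncard_directedTriangles_eq_card_cliqueFinset [DecidableEq V] (r : V → V → Prop)
    [IsStrictTotalOrder V r] :
    {p : V × V × V | G.Adj p.1 p.2.1 ∧ G.Adj p.2.1 p.2.2 ∧ G.Adj p.1 p.2.2 ∧
        r p.1 p.2.1 ∧ r p.2.1 p.2.2}.ncard = #(G.cliqueFinset 3) := by
  rw [← Set.ncard_coe_finset, coe_cliqueFinset]
  refine Set.ncard_congr (fun p _ ↦ ({p.1, p.2.1, p.2.2} : Finset V)) ?_ ?_ ?_
  · rintro ⟨a, b, c⟩ ⟨hab, hbc, hac, -, -⟩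
    exact is3Clique_triple_iff.2 ⟨hab, hac, hbc⟩
  · rintro ⟨a, b, c⟩ ⟨a', b', c'⟩ ⟨-, -, -, hab, hbc⟩ ⟨-, -, -, hab', hbc'⟩ h
    exact eq_of_rel_of_insert_eq hab hbc hab' hbc' h
  · rintro s hs
    obtain ⟨a, b, c, hab, hac, hbc, rfl⟩ := is3Clique_iff.1 hs
    obtain ⟨x, y, z, hxy, hyz, hxyz⟩ := exists_rel_rel_insert_eq (r := r) hab.ne hac.ne hbc.ne
    rw [← hxyz] at hs
    obtain ⟨hxy', hxz', hyz'⟩ := is3Clique_triple_iff.1 hs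
    exact ⟨(x, y, z), ⟨hxy', hyz', hxz', hxy, hyz⟩, hxyz⟩

theorem ncard_outNeighbors_sq_le {r : V → V → Prop}
    (hr : ∀ u v, r u v → G.degree u ≤ G.degree v) (u : V) :
    {v | G.Adj u v ∧ r u v}.ncard ^ 2 ≤ 2 * #G.edgeFinset := by
  set S := {v ∈ G.neighborFinset u | r u v}
  have hS : {v | G.Adj u v ∧ r u v} = S := by ext; simp [S]
  have hS_le : #S ≤ G.degree u :=
    (card_filter_le _ _).trans_eq (G.card_neighborFinset_eq_degree u)
  rw [hS, Set.ncard_coe_finset]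
  calc #S ^ 2 = ∑ _v ∈ S, #S := by rw [sum_const, smul_eq_mul, sq]
    _ ≤ ∑ v ∈ S, G.degree v :=
      sum_le_sum fun v hv ↦ hS_le.trans (hr u v (mem_filter.1 hv).2)
    _ ≤ ∑ v, G.degree v := sum_le_sum_of_subset (subset_univ S)
    _ = 2 * #G.edgeFinset := G.sum_degrees_eq_twice_card_edges

end SimpleGraph

section DegreeOrientation

variable {V : Type*} [Fintype V] [LinearOrder V] (G : SimpleGraph V)

instance DegOrder.isStrictTotalOrder : IsStrictTotalOrder V (DegOrder G) where
  trichotomous u v := by unfold DegOrder; grind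
  irrefl u := by unfold DegOrder; grind
  trans u v w := by unfold DegOrder; grind

theorem DegOrder.degree_le {G : SimpleGraph V} {u v : V} (h : DegOrder G u v) :
    G.degree u ≤ G.degree v := by
  rcases h with h | ⟨h, -⟩
  exacts [h.le, h.le]

theorem outDeg_le_sqrt (u : V) : (outDeg G u : ℝ) ≤ √(2 * #G.edgeFinset) :=
  Real.le_sqrt_of_sq_le <| by
    exact_mod_cast G.ncard_outNeighbors_sq_le (fun _ _ ↦ DegOrder.degree_le) u

theorem sum_min_outDeg_le :
    ∑ p ∈ {p : V × V | G.Adj p.1 p.2 ∧ DegOrder G p.1 p.2},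
        (min (outDeg G p.1) (outDeg G p.2) : ℝ) ≤
      #G.edgeFinset * √(2 * #G.edgeFinset) := by
  calc _ ≤ _ • √(2 * #G.edgeFinset) :=
        sum_le_card_nsmul _ _ _ fun p _ ↦ (min_le_left _ _).trans (outDeg_le_sqrt G p.1)
    _ = _ := by rw [G.card_filter_adj_rel_eq_card_edgeFinset, nsmul_eq_mul]

end DegreeOrientation

theorem Real.mul_sqrt_two_mul {x : ℝ} (hx : 0 ≤ x) :
    x * √(2 * x) = √2 * x ^ ((3 : ℝ) / 2) := by
  rw [Real.sqrt_mul zero_le_two, show (3 : ℝ) / 2 = 1 + 1 / 2 by norm_num,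
    Real.rpow_add' hx (by norm_num), Real.rpow_one, ← Real.sqrt_eq_rpow]
  ring

/-- Worst-case optimal triangle counting via degree orientation: summing, over
all oriented edges `(u,v)`, the cost `min(|N⁺(u)|, |N⁺(v)|)` of intersecting
the two out-neighbourhoods gives total time at most `√2 · IN^(3/2)`, and every
undirected triangle (3-clique) appears exactly once as a directed triangle
under the acyclic orientation. -/
theorem triangle_counting_worst_case_optimal {V : Type*} [Fintype V]
    [LinearOrder V] (G : SimpleGraph V) :
    (∑ p ∈ Finset.univ.filter
        (fun p : V × V => G.Adj p.1 p.2 ∧ DegOrder G p.1 p.2),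
        (min (outDeg G p.1) (outDeg G p.2) : ℝ)) ≤
      Real.sqrt 2 * (G.edgeFinset.card : ℝ) ^ ((3 : ℝ) / 2) ∧
    {p : V × V × V | G.Adj p.1 p.2.1 ∧ G.Adj p.2.1 p.2.2 ∧ G.Adj p.1 p.2.2 ∧
        DegOrder G p.1 p.2.1 ∧ DegOrder G p.2.1 p.2.2}.ncard =
      (G.cliqueFinset 3).card :=
  ⟨(sum_min_outDeg_le G).trans_eq (Real.mul_sqrt_two_mul (Nat.cast_nonneg _)),
    G.ncard_directedTriangles_eq_card_cliqueFinset (DegOrder G)⟩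
end
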